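/- The comultiplication is a morphism of right modules over the twisted multiplication up to the defining subspaces: for any g, h, k ∈ G and any c′, c″ ∈ 𝒞, the element Δ_{h,kg}(m_{hk,g}(c″ ⊗ c′)) − (1 ⊗ m_{k,g})(Δ_{h,k}(c″) ⊗ c′) lies in the subspace 𝒞_h ⊗ 𝒞 of 𝒞⊗𝒞; hence in HH₀(𝒞) the comultiplication is a morphism of right modules. -/

import Mathlib

/-!
The cocycle identity `(hk)(x) c_{hk,g} c_{h,kg}⁻¹ = c_{h,k}⁻¹ h(k(x) c_{k,g})` rewrites the first
term as `Σ_{l,i} ξ′_l y_{l,i} ⊗ ξ″_i`. Because `θ` is a trace and `ξ` is symmetric, a factor can be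
moved across `ξ`: `Σᵢ x ξ′ᵢ y ⊗ ξ″ᵢ = Σᵢ ξ′ᵢ ⊗ y ξ″ᵢ x`; this rewrites the second term as
`Σ_{l,i} y_{l,i} h(ξ′_l) ⊗ ξ″_i`. The difference is then a sum of generators of `𝒞_h ⊗ 𝒞`.
-/

open scoped TensorProduct

noncomputable section

variable {K : Type*} [Field K] {G : Type*} [Group G]
  {A : Type*} [Ring A] [Algebra K A] {ι : Type*} [Fintype ι]

/-- The subspace `𝒞_h = span{c₁c₂ − c₂·h(c₁) | c₁, c₂ ∈ 𝒞}`. -/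
def commSub (ρ : G → A ≃ₐ[K] A) (h : G) : Submodule K A :=
  Submodule.span K {x | ∃ c₁ c₂ : A, x = c₁ * c₂ - c₂ * ρ h c₁}

/-- The map `T_h(g)(c) = c_e⁻¹ c_{g,g⁻¹}⁻¹ g(c) c_{g,h} c_{gh,g⁻¹}`. -/
def Tmap (ρ : G → A ≃ₐ[K] A) (u : G → G → Aˣ) (ue : Aˣ) (g h : G) (x : A) : A :=
  (↑(ue⁻¹) : A) * (↑((u g g⁻¹)⁻¹) : A) * ρ g x * (↑(u g h) : A) * (↑(u (g * h) g⁻¹) : A)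

/-- The twisted multiplication `m_{g,h}(c′⊗c″) = Σᵢ ξ′ᵢ c′ g(ξ″ᵢ c″) c_{g,h}`. -/
def mMul (ρ : G → A ≃ₐ[K] A) (u : G → G → Aˣ) (ξ₁ ξ₂ : ι → A) (g h : G)
    (c' c'' : A) : A :=
  ∑ i, ξ₁ i * c' * ρ g (ξ₂ i * c'') * (↑(u g h) : A)

/-- The twisted comultiplication `Δ_{g,h}(c) = Σᵢ c c_{g,h}⁻¹ g(ξ′ᵢ) ⊗ ξ″ᵢ`. -/
def ΔCom (ρ : G → A ≃ₐ[K] A) (u : G → G → Aˣ) (ξ₁ ξ₂ : ι → A) (g h : G)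
    (c : A) : A ⊗[K] A :=
  ∑ i, (c * (↑((u g h)⁻¹) : A) * ρ g (ξ₁ i)) ⊗ₜ[K] ξ₂ i

/-- The subspace `𝒞_g ⊗ 𝒞` of `𝒞 ⊗ 𝒞`. -/
def leftTensor (ρ : G → A ≃ₐ[K] A) (g : G) : Submodule K (A ⊗[K] A) :=
  Submodule.span K {z | ∃ x ∈ commSub ρ g, ∃ y : A, z = x ⊗ₜ[K] y}

/-- The subspace `𝒞 ⊗ 𝒞_h` of `𝒞 ⊗ 𝒞`. -/
def rightTensor (ρ : G → A ≃ₐ[K] A) (h : G) : Submodule K (A ⊗[K] A) :=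
  Submodule.span K {z | ∃ x : A, ∃ y ∈ commSub ρ h, z = x ⊗ₜ[K] y}

section TraceDualPair

variable (θ : A →ₗ[K] K) (ξ₁ ξ₂ : ι → A)

theorem eq_sum_trace_mul_smul_of_symm (hξ : ∀ a : A, a = ∑ i, θ (a * ξ₂ i) • ξ₁ i)
    (hξsym : (∑ i, ξ₁ i ⊗ₜ[K] ξ₂ i) = ∑ i, ξ₂ i ⊗ₜ[K] ξ₁ i) (a : A) :
    a = ∑ i, θ (a * ξ₁ i) • ξ₂ i := by
  have := congrArg
    (TensorProduct.lift ((LinearMap.lsmul K A).comp (θ.comp (LinearMap.mulLeft K a)))) hξsym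
  simp only [map_sum, TensorProduct.lift.tmul, LinearMap.comp_apply, LinearMap.mulLeft_apply,
    LinearMap.lsmul_apply] at this
  rw [this, ← hξ a]

variable {θ ξ₁ ξ₂}

theorem sum_apply_tmul_eq_sum_tmul_adjoint (hξ : ∀ a : A, a = ∑ i, θ (a * ξ₂ i) • ξ₁ i)
    (hξ' : ∀ a : A, a = ∑ i, θ (a * ξ₁ i) • ξ₂ i) (f f' : A →ₗ[K] A)
    (hff' : ∀ x y : A, θ (f x * y) = θ (f' y * x)) :
    ∑ i, f (ξ₁ i) ⊗ₜ[K] ξ₂ i = ∑ i, ξ₁ i ⊗ₜ[K] f' (ξ₂ i) := by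
  calc ∑ i, f (ξ₁ i) ⊗ₜ[K] ξ₂ i
      = ∑ i, (∑ j, θ (f (ξ₁ i) * ξ₂ j) • ξ₁ j) ⊗ₜ[K] ξ₂ i := by simp_rw [← hξ]
    _ = ∑ j, ξ₁ j ⊗ₜ[K] ∑ i, θ (f' (ξ₂ j) * ξ₁ i) • ξ₂ i := by
        simp only [TensorProduct.sum_tmul, TensorProduct.tmul_sum, TensorProduct.smul_tmul, hff']
        exact Finset.sum_comm
    _ = ∑ j, ξ₁ j ⊗ₜ[K] f' (ξ₂ j) := by simp_rw [← hξ']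

theorem sum_mul_mul_tmul_eq_sum_tmul_mul_mul (htr : ∀ a b : A, θ (a * b) = θ (b * a))
    (hξ : ∀ a : A, a = ∑ i, θ (a * ξ₂ i) • ξ₁ i)
    (hξ' : ∀ a : A, a = ∑ i, θ (a * ξ₁ i) • ξ₂ i) (x y : A) :
    ∑ i, (x * ξ₁ i * y) ⊗ₜ[K] ξ₂ i = ∑ i, ξ₁ i ⊗ₜ[K] (y * ξ₂ i * x) := by
  refine sum_apply_tmul_eq_sum_tmul_adjoint hξ hξ'
    (LinearMap.mulLeftRight K (x, y)) (LinearMap.mulLeftRight K (y, x)) fun a b => ?_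
  simp only [LinearMap.mulLeftRight_apply]
  rw [htr (y * b * x), ← mul_assoc, mul_assoc x, mul_assoc x, htr x]
  simp only [mul_assoc]

end TraceDualPair

section TwistedOperations

variable {ρ : G → A ≃ₐ[K] A} {u : G → G → Aˣ}

theorem apply_mul_mul_inv_eq_of_cocycle
    (hAd : ∀ (g h : G) (x : A),
      ρ g (ρ h x) = (↑(u g h) : A) * ρ (g * h) x * (↑((u g h)⁻¹) : A))
    (hcoc : ∀ g h k : G,
      (↑(u g h) : A) * (↑(u (g * h) k) : A) = ρ g (↑(u h k) : A) * (↑(u g (h * k)) : A))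
    (g h k : G) (x : A) :
    ρ (h * k) x * ↑(u (h * k) g) * ↑(u h (k * g))⁻¹ = ↑(u h k)⁻¹ * ρ h (ρ k x * ↑(u k g)) := by
  calc ρ (h * k) x * ↑(u (h * k) g) * ↑(u h (k * g))⁻¹
      = ↑(u h k)⁻¹ * (↑(u h k) * ρ (h * k) x * ↑(u h k)⁻¹) * (↑(u h k) * ↑(u (h * k) g))
          * ↑(u h (k * g))⁻¹ := by simp only [mul_assoc, Units.inv_mul_cancel_left]
    _ = ↑(u h k)⁻¹ * ρ h (ρ k x) * (ρ h ↑(u k g) * ↑(u h (k * g))) * ↑(u h (k * g))⁻¹ := by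
        rw [hAd, hcoc]
    _ = ↑(u h k)⁻¹ * ρ h (ρ k x * ↑(u k g)) := by
        simp only [map_mul, mul_assoc, Units.mul_inv, mul_one]

omit [Group G] in
theorem mMul_eq_sum (ξ₁ ξ₂ : ι → A) (g k : G) (a c' : A) :
    mMul ρ u ξ₁ ξ₂ k g a c' = ∑ l, ξ₁ l * a * (ρ k (ξ₂ l * c') * ↑(u k g)) := by
  simp only [mMul, mul_assoc]

theorem ΔCom_mMul_eq_sum
    (hAd : ∀ (g h : G) (x : A),
      ρ g (ρ h x) = (↑(u g h) : A) * ρ (g * h) x * (↑((u g h)⁻¹) : A))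
    (hcoc : ∀ g h k : G,
      (↑(u g h) : A) * (↑(u (g * h) k) : A) = ρ g (↑(u h k) : A) * (↑(u g (h * k)) : A))
    (ξ₁ ξ₂ : ι → A) (g h k : G) (c' c'' : A) :
    ΔCom ρ u ξ₁ ξ₂ h (k * g) (mMul ρ u ξ₁ ξ₂ (h * k) g c'' c') =
      ∑ l, ∑ i, (ξ₁ l * (c'' * ↑(u h k)⁻¹ * ρ h (ρ k (ξ₂ l * c') * ↑(u k g) * ξ₁ i)))
        ⊗ₜ[K] ξ₂ i := by
  simp only [ΔCom, mMul, Finset.sum_mul, TensorProduct.sum_tmul]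
  rw [Finset.sum_comm]
  refine Finset.sum_congr rfl fun l _ => Finset.sum_congr rfl fun i _ => ?_
  have hcoc' := apply_mul_mul_inv_eq_of_cocycle hAd hcoc g h k (ξ₂ l * c')
  rw [mul_assoc (ξ₁ l * c''), mul_assoc (ξ₁ l * c''), hcoc', map_mul (ρ h) _ (ξ₁ i)]
  simp only [mul_assoc]

omit [Group G] in
theorem sum_tmul_mMul_eq_sum {θ : A →ₗ[K] K} {ξ₁ ξ₂ : ι → A}
    (htr : ∀ a b : A, θ (a * b) = θ (b * a))
    (hξ : ∀ a : A, a = ∑ i, θ (a * ξ₂ i) • ξ₁ i)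
    (hξ' : ∀ a : A, a = ∑ i, θ (a * ξ₁ i) • ξ₂ i) (g h k : G) (v c' : A) :
    ∑ i, (v * ρ h (ξ₁ i)) ⊗ₜ[K] mMul ρ u ξ₁ ξ₂ k g (ξ₂ i) c' =
      ∑ l, ∑ i, (v * ρ h (ρ k (ξ₂ l * c') * ↑(u k g) * ξ₁ i) * ρ h (ξ₁ l)) ⊗ₜ[K] ξ₂ i := by
  simp only [mMul_eq_sum, TensorProduct.tmul_sum]
  rw [Finset.sum_comm]
  refine Finset.sum_congr rfl fun l _ => ?_
  have := congrArg (TensorProduct.map ((LinearMap.mulLeft K v).comp (ρ h).toLinearMap)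
    LinearMap.id) (sum_mul_mul_tmul_eq_sum_tmul_mul_mul htr hξ hξ'
      (ρ k (ξ₂ l * c') * ↑(u k g)) (ξ₁ l))
  simpa only [map_sum, TensorProduct.map_tmul, LinearMap.comp_apply, LinearMap.mulLeft_apply,
    AlgEquiv.toLinearMap_apply, LinearMap.id_apply, map_mul, mul_assoc] using this.symm

omit [Group G] in
theorem mul_sub_mul_tmul_mem_leftTensor (h : G) (x y z : A) :
    (x * y - y * ρ h x) ⊗ₜ[K] z ∈ leftTensor ρ h :=
  Submodule.subset_span ⟨_, Submodule.subset_span ⟨x, y, rfl⟩, z, rfl⟩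

end TwistedOperations

theorem ΔCom_right_module_morphism_general
    (ρ : G → A ≃ₐ[K] A) (u : G → G → Aˣ)
    (hAd : ∀ (g h : G) (x : A),
      ρ g (ρ h x) = (↑(u g h) : A) * ρ (g * h) x * (↑((u g h)⁻¹) : A))
    (hcoc : ∀ g h k : G,
      (↑(u g h) : A) * (↑(u (g * h) k) : A) = ρ g (↑(u h k) : A) * (↑(u g (h * k)) : A))
    (θ : A →ₗ[K] K)
    (htr : ∀ a b : A, θ (a * b) = θ (b * a))
    (ξ₁ ξ₂ : ι → A)
    (hξ : ∀ a : A, a = ∑ i, θ (a * ξ₂ i) • ξ₁ i)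
    (hξsym : (∑ i, ξ₁ i ⊗ₜ[K] ξ₂ i) = ∑ i, ξ₂ i ⊗ₜ[K] ξ₁ i)
    (g h k : G) (c' c'' : A) :
    ΔCom ρ u ξ₁ ξ₂ h (k * g) (mMul ρ u ξ₁ ξ₂ (h * k) g c'' c') -
        ∑ i, (c'' * (↑((u h k)⁻¹) : A) * ρ h (ξ₁ i)) ⊗ₜ[K] mMul ρ u ξ₁ ξ₂ k g (ξ₂ i) c' ∈
      leftTensor ρ h := by
  have hξ' := eq_sum_trace_mul_smul_of_symm θ ξ₁ ξ₂ hξ hξsym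
  rw [ΔCom_mMul_eq_sum hAd hcoc, sum_tmul_mMul_eq_sum htr hξ hξ', ← Finset.sum_sub_distrib]
  refine Submodule.sum_mem _ fun l _ => ?_
  rw [← Finset.sum_sub_distrib]
  refine Submodule.sum_mem _ fun i _ => ?_
  rw [← TensorProduct.sub_tmul]
  exact mul_sub_mul_tmul_mem_leftTensor h _ _ _

theorem ΔCom_right_module_morphism
    [Fintype G] (ρ : G → A ≃ₐ[K] A) (u : G → G → Aˣ) (ue : Aˣ)
    (hAd : ∀ (g h : G) (x : A),
      ρ g (ρ h x) = (↑(u g h) : A) * ρ (g * h) x * (↑((u g h)⁻¹) : A))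
    (hAde : ∀ x : A, ρ (1 : G) x = (↑ue : A) * x * (↑(ue⁻¹) : A))
    (hcoc : ∀ g h k : G,
      (↑(u g h) : A) * (↑(u (g * h) k) : A) = ρ g (↑(u h k) : A) * (↑(u g (h * k)) : A))
    (hue1 : ∀ g : G, (↑(u g 1) : A) = ρ g (↑ue : A))
    (hue2 : ∀ g : G, (↑(u 1 g) : A) = (↑ue : A))
    [FiniteDimensional K A] (θ : A →ₗ[K] K)
    (htr : ∀ a b : A, θ (a * b) = θ (b * a))
    (hnd : ∀ a : A, (∀ b : A, θ (a * b) = 0) → a = 0)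
    (hGinv : ∀ (g : G) (a : A), θ (ρ g a) = θ a)
    (ξ₁ ξ₂ : ι → A)
    (hξ : ∀ a : A, a = ∑ i, θ (a * ξ₂ i) • ξ₁ i)
    (hξsym : (∑ i, ξ₁ i ⊗ₜ[K] ξ₂ i) = ∑ i, ξ₂ i ⊗ₜ[K] ξ₁ i)
    (g h k : G) (c' c'' : A) :
    ΔCom ρ u ξ₁ ξ₂ h (k * g) (mMul ρ u ξ₁ ξ₂ (h * k) g c'' c') -
        ∑ i, (c'' * (↑((u h k)⁻¹) : A) * ρ h (ξ₁ i)) ⊗ₜ[K] mMul ρ u ξ₁ ξ₂ k g (ξ₂ i) c' ∈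
      leftTensor ρ h :=
  ΔCom_right_module_morphism_general ρ u hAd hcoc θ htr ξ₁ ξ₂ hξ hξsym g h k c' c''
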